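/- In any algebra (S,*,') satisfying the three axioms, the identity (x * y) * z' = x * (y * z') holds for all x, y, z in S. -/

import Mathlib

/-! Write `x ⋆ y` for `m x y` and `x′` for `i x`. By (E1) and (E3) the elements `z′ ⋆ z` are
idempotents with `x ⋆ (x′ ⋆ x) = x` and `(z′ ⋆ z) ⋆ z′ = z′`, and by (E2) they commute. Commuting
`z′ ⋆ z` past `z′′′ ⋆ z′′` shows that `z′ ⋆ z` is also a left unit for `z′′′`; together with
idempotency this forces `z′′′ = z′`, and then (E3) applied to `(x ⋆ y) ⋆ z′` is the claim. -/

section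

variable {S : Type*} {m : S → S → S} {i : S → S}

local infixl:70 " ⋆ " => m
local postfix:max "′" => i

theorem mul_inv_inv_mul_inv_mul_cancel (E1 : ∀ x, (x ⋆ x′) ⋆ x = x)
    (E3 : ∀ x y z, (x ⋆ y) ⋆ z = x ⋆ (y ⋆ z′′)) (x z : S) :
    ((x ⋆ z′′) ⋆ z′) ⋆ z = x ⋆ z′′ := by
  rw [E3 x z′′ z′, E3, E1]

theorem inv_mul_inv_inv (E1 : ∀ x, (x ⋆ x′) ⋆ x = x)
    (E3 : ∀ x y z, (x ⋆ y) ⋆ z = x ⋆ (y ⋆ z′′)) (z : S) :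
    z′ ⋆ z′′ = z′ ⋆ z := by
  simpa only [E1] using (mul_inv_inv_mul_inv_mul_cancel E1 E3 z′ z).symm

theorem inv_mul_mul_inv (E1 : ∀ x, (x ⋆ x′) ⋆ x = x)
    (E3 : ∀ x y z, (x ⋆ y) ⋆ z = x ⋆ (y ⋆ z′′)) (z : S) :
    (z′ ⋆ z) ⋆ z′ = z′ := by
  simpa only [inv_mul_inv_inv E1 E3] using E1 z′

theorem mul_inv_mul (E1 : ∀ x, (x ⋆ x′) ⋆ x = x)
    (E3 : ∀ x y z, (x ⋆ y) ⋆ z = x ⋆ (y ⋆ z′′)) (x z : S) :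
    (x ⋆ z′) ⋆ z = x ⋆ (z′ ⋆ z) := by
  rw [E3, inv_mul_inv_inv E1 E3]

theorem mul_inv_mul_self (E1 : ∀ x, (x ⋆ x′) ⋆ x = x)
    (E3 : ∀ x y z, (x ⋆ y) ⋆ z = x ⋆ (y ⋆ z′′)) (x : S) :
    x ⋆ (x′ ⋆ x) = x := by
  rw [← mul_inv_mul E1 E3, E1]

theorem inv_mul_mul_inv_mul (E1 : ∀ x, (x ⋆ x′) ⋆ x = x)
    (E3 : ∀ x y z, (x ⋆ y) ⋆ z = x ⋆ (y ⋆ z′′)) (z : S) :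
    (z′ ⋆ z) ⋆ (z′ ⋆ z) = z′ ⋆ z := by
  rw [← mul_inv_mul E1 E3, inv_mul_mul_inv E1 E3]

theorem inv_inv_mul_inv_mul (E1 : ∀ x, (x ⋆ x′) ⋆ x = x)
    (E3 : ∀ x y z, (x ⋆ y) ⋆ z = x ⋆ (y ⋆ z′′)) (z : S) :
    z′′ ⋆ (z′ ⋆ z) = z′′ := by
  have h : (z′′ ⋆ z′′′) ⋆ z = z′′ := by rw [E3, mul_inv_mul_self E1 E3]
  rwa [inv_mul_inv_inv E1 E3, mul_inv_mul E1 E3] at h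

theorem mul_inv_inv_mul_inv_mul_cancel_assoc (E1 : ∀ x, (x ⋆ x′) ⋆ x = x)
    (E3 : ∀ x y z, (x ⋆ y) ⋆ z = x ⋆ (y ⋆ z′′)) (x z : S) :
    (x ⋆ z′′) ⋆ (z′ ⋆ z) = x ⋆ z′′ := by
  rw [← mul_inv_mul E1 E3, mul_inv_inv_mul_inv_mul_cancel E1 E3]

theorem inv_mul_comm (E1 : ∀ x, (x ⋆ x′) ⋆ x = x)
    (E2 : ∀ x y, (x ⋆ x′) ⋆ (y′ ⋆ y) = (y′ ⋆ y) ⋆ (x ⋆ x′))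
    (E3 : ∀ x y z, (x ⋆ y) ⋆ z = x ⋆ (y ⋆ z′′)) (a b : S) :
    (a′ ⋆ a) ⋆ (b′ ⋆ b) = (b′ ⋆ b) ⋆ (a′ ⋆ a) := by
  simpa only [inv_mul_inv_inv E1 E3] using (E2 b′ a).symm

theorem inv_mul_mul_inv_inv_inv (E1 : ∀ x, (x ⋆ x′) ⋆ x = x)
    (E2 : ∀ x y, (x ⋆ x′) ⋆ (y′ ⋆ y) = (y′ ⋆ y) ⋆ (x ⋆ x′))
    (E3 : ∀ x y z, (x ⋆ y) ⋆ z = x ⋆ (y ⋆ z′′)) (z : S) :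
    (z′ ⋆ z) ⋆ z′′′ = z′′′ := by
  calc (z′ ⋆ z) ⋆ z′′′ = (z′ ⋆ z) ⋆ ((z′′′ ⋆ z′′) ⋆ z′′′) := by rw [inv_mul_mul_inv E1 E3]
    _ = ((z′ ⋆ z) ⋆ (z′′′ ⋆ z′′)) ⋆ z′ := (E3 _ _ _).symm
    _ = ((z′′′ ⋆ z′′) ⋆ (z′ ⋆ z)) ⋆ z′ := by rw [inv_mul_comm E1 E2 E3]
    _ = (z′′′ ⋆ z′′) ⋆ z′ := by rw [mul_inv_inv_mul_inv_mul_cancel_assoc E1 E3]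
    _ = z′′′ := by rw [mul_inv_mul E1 E3, inv_inv_mul_inv_mul E1 E3]

theorem inv_inv_inv (E1 : ∀ x, (x ⋆ x′) ⋆ x = x)
    (E2 : ∀ x y, (x ⋆ x′) ⋆ (y′ ⋆ y) = (y′ ⋆ y) ⋆ (x ⋆ x′))
    (E3 : ∀ x y z, (x ⋆ y) ⋆ z = x ⋆ (y ⋆ z′′)) (z : S) :
    z′′′ = z′ := by
  calc z′′′ = (z′ ⋆ z) ⋆ ((z′ ⋆ z) ⋆ z′′′) := by rw [inv_mul_mul_inv_inv_inv E1 E2 E3,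
        inv_mul_mul_inv_inv_inv E1 E2 E3]
    _ = ((z′ ⋆ z) ⋆ (z′ ⋆ z)) ⋆ z′ := (E3 _ _ _).symm
    _ = z′ := by rw [inv_mul_mul_inv_mul E1 E3, inv_mul_mul_inv E1 E3]

end

theorem stmt (S : Type*) (m : S → S → S) (i : S → S)
    (E1 : ∀ x, m (m x (i x)) x = x)
    (E2 : ∀ x y, m (m x (i x)) (m (i y) y) = m (m (i y) y) (m x (i x)))
    (E3 : ∀ x y z, m (m x y) z = m x (m y (i (i z)))) :
    ∀ x y z, m (m x y) (i z) = m x (m y (i z)) := by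
  intro x y z
  rw [E3, inv_inv_inv E1 E2 E3]
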